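/- In the von Mises-Fisher model, the 1-Euler-Schouten curvature tensor of the curved family M_c in the ambient exponential family satisfies H_{abκ}^{(1)}(u) = −(1/r†) g_{ab}(u), where κ labels the single normal direction. Consequently the mean curvature is H_κ^{(1)} = −1/r†, the umbilic tensor K_{abκ}^{(1)} = H_{abκ}^{(1)} − g_{ab} H_κ^{(1)} vanishes identically, and the model is totally exponential umbilic with κ² = 0 and γ² = m/(r†)². -/

import Mathlib

open scoped BigOperators

/-- Partial derivative in the direction of the `a`-th coordinate. -/
noncomputable def pd {m : ℕ} (a : Fin m) (f : (Fin m → ℝ) → ℝ) (u : Fin m → ℝ) : ℝ :=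
  fderiv ℝ f u (Pi.single a 1)

/-- Spherical polar parametrization of the unit sphere `S^m ⊂ ℝ^{m+1}` (0-based). -/
noncomputable def xi (m : ℕ) (i : Fin (m + 1)) (u : Fin m → ℝ) : ℝ :=
  (∏ c ∈ Finset.univ.filter (fun c : Fin m => (c : ℕ) < (i : ℕ)), Real.sin (u c)) *
    (if h : (i : ℕ) < m then Real.cos (u ⟨i, h⟩) else 1)

/-- Fisher metric `g_{ab} = r r† (∂_a ξ)·(∂_b ξ)` of the von Mises–Fisher model. -/
noncomputable def vmfg (m : ℕ) (r rd : ℝ) (u : Fin m → ℝ) (a b : Fin m) : ℝ :=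
  r * rd * ∑ i, pd a (xi m i) u * pd b (xi m i) u

/-- 1-Euler–Schouten curvature `H_{abκ}^{(1)} = (∂_a B_b^i) B_{κi}` with
`B_b^i = ∂_b (r ξ^i)` and unit normal `B_{κi} = ξ_i`. -/
noncomputable def vmfH (m : ℕ) (r : ℝ) (u : Fin m → ℝ) (a b : Fin m) : ℝ :=
  ∑ i, pd a (fun u' => pd b (fun u'' => r * xi m i u'') u') u * xi m i u

lemma xi_contDiff (m : ℕ) (i : Fin (m+1)) : ContDiff ℝ (⊤ : ℕ∞) (xi m i) := by
  unfold xi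
  apply ContDiff.mul
  · apply contDiff_iff_contDiffAt.mpr
    intro x
    apply contDiffAt_prod
    intro c _
    exact (Real.contDiff_sin.comp (contDiff_apply ℝ ℝ c)).contDiffAt
  · split
    · exact Real.contDiff_cos.comp (contDiff_apply ℝ ℝ _)
    · exact contDiff_const

lemma pd_contDiff {m : ℕ} {f : (Fin m → ℝ) → ℝ} (hf : ContDiff ℝ (⊤ : ℕ∞) f) (b : Fin m) :
    ContDiff ℝ (⊤ : ℕ∞) (pd b f) := by
  have h1 : ContDiff ℝ (⊤ : ℕ∞) (fderiv ℝ f) := hf.fderiv_right (by simp)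
  exact (ContinuousLinearMap.apply ℝ ℝ (Pi.single b 1)).contDiff.comp h1

lemma pd_const {m : ℕ} (a : Fin m) (c : ℝ) (u : Fin m → ℝ) :
    pd a (fun _ => c) u = 0 := by
  simp [pd, fderiv_const]

lemma pd_mul {m : ℕ} {f g : (Fin m → ℝ) → ℝ} (hf : ContDiff ℝ (⊤ : ℕ∞) f) (hg : ContDiff ℝ (⊤ : ℕ∞) g)
    (a : Fin m) (u : Fin m → ℝ) :
    pd a (fun u => f u * g u) u = pd a f u * g u + f u * pd a g u := by
  unfold pd
  rw [fderiv_fun_mul ((hf.differentiable (by simp)).differentiableAt)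
    ((hg.differentiable (by simp)).differentiableAt)]
  simp [smul_eq_mul]
  ring

lemma pd_sum {m : ℕ} {ι : Type*} [Fintype ι] (f : ι → (Fin m → ℝ) → ℝ)
    (hf : ∀ i, ContDiff ℝ (⊤ : ℕ∞) (f i)) (a : Fin m) (u : Fin m → ℝ) :
    pd a (fun u => ∑ i, f i u) u = ∑ i, pd a (f i) u := by
  unfold pd
  rw [fderiv_fun_sum fun i _ => ((hf i).differentiable (by simp)).differentiableAt]
  simp

lemma pd_const_mul {m : ℕ} {f : (Fin m → ℝ) → ℝ} (hf : ContDiff ℝ (⊤ : ℕ∞) f) (r : ℝ)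
    (a : Fin m) (u : Fin m → ℝ) :
    pd a (fun u => r * f u) u = r * pd a f u := by
  unfold pd
  rw [fderiv_const_mul ((hf.differentiable (by simp)).differentiableAt)]
  simp

lemma sum_sq_xi (m : ℕ) (u : Fin m → ℝ) : ∑ i, xi m i u * xi m i u = 1 := by
  set Q : ℕ → ℝ := fun k =>
    ∏ c ∈ Finset.univ.filter (fun c : Fin m => (c : ℕ) < k), (Real.sin (u c))^2 with hQ
  set g : ℕ → ℝ := fun k => if h : k < m then Q k * (Real.cos (u ⟨k, h⟩))^2 else Q k with hg
  have hterm : ∀ i : Fin (m+1), xi m i u * xi m i u = g (i : ℕ) := by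
    intro i
    simp only [xi, hg, hQ]
    by_cases h : (i : ℕ) < m
    · simp only [dif_pos h]
      rw [Finset.prod_pow]
      ring
    · simp only [dif_neg h]
      rw [Finset.prod_pow]
      ring
  have hQsucc : ∀ k (hk : k < m), Q (k+1) = Q k * (Real.sin (u ⟨k, hk⟩))^2 := by
    intro k hk
    have hset : Finset.univ.filter (fun c : Fin m => (c : ℕ) < k + 1)
        = insert (⟨k, hk⟩ : Fin m) (Finset.univ.filter (fun c : Fin m => (c : ℕ) < k)) := by
      ext c
      simp [Fin.ext_iff]
      omega
    simp only [hQ, hset]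
    rw [Finset.prod_insert (by simp)]
    ring
  have hQ0 : Q 0 = 1 := by simp [hQ]
  calc ∑ i : Fin (m+1), xi m i u * xi m i u
      = ∑ k ∈ Finset.range (m+1), g k := by
        rw [← Fin.sum_univ_eq_sum_range]
        exact Finset.sum_congr rfl fun i _ => hterm i
    _ = (∑ k ∈ Finset.range m, g k) + g m := Finset.sum_range_succ g m
    _ = (∑ k ∈ Finset.range m, (Q k - Q (k+1))) + Q m := by
        congr 1
        · apply Finset.sum_congr rfl
          intro k hk
          have hk' : k < m := Finset.mem_range.mp hk
          rw [hg]
          simp only [dif_pos hk']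
          rw [hQsucc k hk']
          linear_combination Q k * Real.sin_sq_add_cos_sq (u ⟨k, hk'⟩)
        · simp [hg]
    _ = (Q 0 - Q m) + Q m := by rw [Finset.sum_range_sub' Q]
    _ = 1 := by rw [hQ0]; ring

lemma sum_xi_pd (m : ℕ) (u : Fin m → ℝ) (a : Fin m) :
    ∑ i, xi m i u * pd a (xi m i) u = 0 := by
  have hc : (fun u : Fin m → ℝ => ∑ i, xi m i u * xi m i u) = fun _ => (1 : ℝ) :=
    funext fun u => sum_sq_xi m u
  have h0 : pd a (fun u : Fin m → ℝ => ∑ i, xi m i u * xi m i u) u = 0 := by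
    rw [hc]; exact pd_const a 1 u
  rw [pd_sum (fun i u => xi m i u * xi m i u)
    (fun i => (xi_contDiff m i).mul (xi_contDiff m i)) a u] at h0
  have h1 : ∀ i : Fin (m+1),
      pd a (fun u => xi m i u * xi m i u) u
        = pd a (xi m i) u * xi m i u + xi m i u * pd a (xi m i) u :=
    fun i => pd_mul (xi_contDiff m i) (xi_contDiff m i) a u
  rw [Finset.sum_congr rfl fun i _ => h1 i] at h0
  rw [Finset.sum_add_distrib] at h0
  have h2 : ∑ i, pd a (xi m i) u * xi m i u = ∑ i, xi m i u * pd a (xi m i) u :=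
    Finset.sum_congr rfl fun i _ => mul_comm _ _
  rw [h2] at h0
  linarith

lemma sum_xi_pdpd (m : ℕ) (u : Fin m → ℝ) (a b : Fin m) :
    ∑ i, xi m i u * pd a (pd b (xi m i)) u
      = -∑ i, pd a (xi m i) u * pd b (xi m i) u := by
  have hc : (fun u : Fin m → ℝ => ∑ i, xi m i u * pd b (xi m i) u) = fun _ => (0 : ℝ) :=
    funext fun u => sum_xi_pd m u b
  have h0 : pd a (fun u : Fin m → ℝ => ∑ i, xi m i u * pd b (xi m i) u) u = 0 := by
    rw [hc]; exact pd_const a 0 u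
  rw [pd_sum (fun i u => xi m i u * pd b (xi m i) u)
    (fun i => (xi_contDiff m i).mul (pd_contDiff (xi_contDiff m i) b)) a u] at h0
  have h1 : ∀ i : Fin (m+1),
      pd a (fun u => xi m i u * pd b (xi m i) u) u
        = pd a (xi m i) u * pd b (xi m i) u + xi m i u * pd a (pd b (xi m i)) u :=
    fun i => pd_mul (xi_contDiff m i) (pd_contDiff (xi_contDiff m i) b) a u
  rw [Finset.sum_congr rfl fun i _ => h1 i, Finset.sum_add_distrib] at h0
  linarith

lemma vmfH_eq (m : ℕ) (r : ℝ) (u : Fin m → ℝ) (a b : Fin m) :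
    vmfH m r u a b = -(r * ∑ i, pd a (xi m i) u * pd b (xi m i) u) := by
  unfold vmfH
  have hstep : ∀ i : Fin (m+1),
      pd a (fun u' => pd b (fun u'' => r * xi m i u'') u') u * xi m i u
        = r * (xi m i u * pd a (pd b (xi m i)) u) := by
    intro i
    have h1 : (fun u' => pd b (fun u'' => r * xi m i u'') u')
        = fun u' => r * pd b (xi m i) u' :=
      funext fun u' => pd_const_mul (xi_contDiff m i) r b u'
    rw [h1, pd_const_mul (pd_contDiff (xi_contDiff m i) b) r a u]
    ring
  rw [Finset.sum_congr rfl fun i _ => hstep i, ← Finset.mul_sum,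
    sum_xi_pdpd m u a b]
  ring

/-- In the von Mises–Fisher model, `H_{abκ}^{(1)} = −(1/r†) g_{ab}`; hence the mean
curvature is `H_κ^{(1)} = −1/r†`, the umbilic tensor
`K_{abκ}^{(1)} = H_{abκ}^{(1)} − g_{ab} H_κ^{(1)}` vanishes identically, and the model
is totally exponential umbilic with `κ² = 0` and `γ² = m/(r†)²`. -/
theorem stmt15 (m : ℕ) (hm : 0 < m) (r rd : ℝ) (hr : 0 < r) (hrd : 0 < rd) :
    (∀ (u : Fin m → ℝ) (a b : Fin m),
      vmfH m r u a b = -(1 / rd) * vmfg m r rd u a b)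
    ∧ (∀ (u : Fin m → ℝ) (a b : Fin m),
        vmfH m r u a b - vmfg m r rd u a b * (-(1 / rd)) = 0)
    ∧ (∀ (u : Fin m → ℝ) (ginv : Fin m → Fin m → ℝ),
        (∀ a b, ∑ c, vmfg m r rd u a c * ginv c b = if a = b then (1 : ℝ) else 0) →
          -- mean 1-ES curvature
          ((1 / (m : ℝ)) * ∑ a, ∑ b, ginv a b * vmfH m r u a b = -(1 / rd))
          -- κ² = 0
          ∧ (∑ a, ∑ b, ∑ a', ∑ b', ginv a a' * ginv b b' *
              ((vmfH m r u a b - vmfg m r rd u a b * (-(1 / rd)))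
                * (vmfH m r u a' b' - vmfg m r rd u a' b' * (-(1 / rd)))) = 0)
          -- γ² = m/(r†)²
          ∧ ((m : ℝ) *
              ((1 / (m : ℝ)) * ∑ a, ∑ b, ginv a b * vmfH m r u a b) ^ 2
                = (m : ℝ) / rd ^ 2)) := by
  have hrd' : rd ≠ 0 := ne_of_gt hrd
  have hm' : (m : ℝ) ≠ 0 := Nat.cast_ne_zero.mpr hm.ne'
  have part1 : ∀ (u : Fin m → ℝ) (a b : Fin m),
      vmfH m r u a b = -(1 / rd) * vmfg m r rd u a b := by
    intro u a b
    rw [vmfH_eq, vmfg]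
    field_simp
  have part2 : ∀ (u : Fin m → ℝ) (a b : Fin m),
      vmfH m r u a b - vmfg m r rd u a b * (-(1 / rd)) = 0 := by
    intro u a b
    rw [part1]
    ring
  refine ⟨part1, part2, ?_⟩
  intro u ginv hginv
  have hgsymm : ∀ a b : Fin m, vmfg m r rd u a b = vmfg m r rd u b a := by
    intro a b
    unfold vmfg
    congr 1
    exact Finset.sum_congr rfl fun i _ => mul_comm _ _
  have hmean : (1 / (m : ℝ)) * ∑ a, ∑ b, ginv a b * vmfH m r u a b = -(1 / rd) := by
    have hsum : ∑ a, ∑ b, ginv a b * vmfH m r u a b = -(1 / rd) * (m : ℝ) := by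
      have h1 : ∀ a b : Fin m, ginv a b * vmfH m r u a b
          = -(1 / rd) * (vmfg m r rd u b a * ginv a b) := by
        intro a b
        rw [part1, hgsymm]
        ring
      calc ∑ a, ∑ b, ginv a b * vmfH m r u a b
          = ∑ a, ∑ b, -(1 / rd) * (vmfg m r rd u b a * ginv a b) := by
            exact Finset.sum_congr rfl fun a _ =>
              Finset.sum_congr rfl fun b _ => h1 a b
        _ = -(1 / rd) * ∑ a, ∑ b, vmfg m r rd u b a * ginv a b := by
            simp [Finset.mul_sum]
        _ = -(1 / rd) * ∑ b, ∑ a, vmfg m r rd u b a * ginv a b := by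
            rw [Finset.sum_comm]
        _ = -(1 / rd) * ∑ b : Fin m, (1 : ℝ) := by
            congr 1
            refine Finset.sum_congr rfl fun b _ => ?_
            rw [hginv b b]
            simp
        _ = -(1 / rd) * (m : ℝ) := by simp
    rw [hsum]
    field_simp
  refine ⟨hmean, ?_, ?_⟩
  · refine Finset.sum_eq_zero fun a _ => Finset.sum_eq_zero fun b _ =>
      Finset.sum_eq_zero fun a' _ => Finset.sum_eq_zero fun b' _ => ?_
    rw [part2]
    ring
  · rw [hmean]
    field_simp
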